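/- arXiv:math/0605490 — 8 statements merged into one kernel-verified Lean document; each statement's English description precedes it below -/
import Mathlib

section
/- The sequence P*_n is submultiplicative: for all integers n₁, n₂ ≥ 1, P*_{n₁+n₂} ≤ P*_{n₁} · P*_{n₂}. Consequently, the limit of (P*_n)^{1/n} as n → ∞ exists and equals inf_{n ≥ 1} (P*_n)^{1/n}. -/
/-- `ω₂` is a *simple reduction* of `ω₁`: it is obtained from `ω₁` by interchanging two
adjacent entries `ω₁ i > ω₁ (i+1)`. -/
def IsSimpleReduction {n : ℕ} (ω₁ ω₂ : Equiv.Perm (Fin n)) : Prop :=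
  ∃ i j : Fin n, (i : ℕ) + 1 = (j : ℕ) ∧ ω₁ j < ω₁ i ∧ ω₂ = ω₁ * Equiv.swap i j

/-- Weak Bruhat order: `π ⪯ σ` iff there is a chain of simple reductions from `σ` down to `π`. -/
def WeakLE {n : ℕ} (π σ : Equiv.Perm (Fin n)) : Prop :=
  Relation.ReflTransGen IsSimpleReduction σ π

/-- `P*_n`: the probability that two independent uniformly random permutations of `[n]`
are comparable (`π ⪯ σ`) in the weak Bruhat order. -/
noncomputable def Pstar (n : ℕ) : ℝ :=
  (Nat.card {p : Equiv.Perm (Fin n) × Equiv.Perm (Fin n) // WeakLE p.1 p.2} : ℝ) /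
    (Nat.factorial n) ^ 2

/-!
Record a permutation by its inversions, the pairs of values `a < b` with `b` to the left of `a`.
Then `π ⪯ σ` iff every inversion of `π` is one of `σ`: unless `π = σ`, some descent of `σ` is not
an inversion of `π`, and undoing it shrinks the inversions of `σ` by exactly that pair. Hence
restricting a comparable pair of `S (n₁ + n₂)` to the `n₁` smallest and to the `n₂` largest values
gives comparable pairs of `S n₁` and `S n₂`, and these, with the positions of the large values in
`π` and in `σ`, determine the pair. So the number `c n` of comparable pairs satisfies
`c (n₁ + n₂) ≤ c n₁ c n₂ binom(n₁ + n₂, n₂)²`, and dividing by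
`(n₁ + n₂)!² = binom(n₁ + n₂, n₂)² n₁!² n₂!²` gives submultiplicativity. The limit is Fekete's
lemma for the subadditive sequence `log P*_n`.
-/

namespace Equiv.Perm

variable {n : ℕ}

def inversions (w : Perm (Fin n)) : Finset (Fin n × Fin n) :=
  {p | p.1 < p.2 ∧ w⁻¹ p.2 < w⁻¹ p.1}

@[simp]
lemma mem_inversions {w : Perm (Fin n)} {p : Fin n × Fin n} :
    p ∈ inversions w ↔ p.1 < p.2 ∧ w⁻¹ p.2 < w⁻¹ p.1 := by
  simp [inversions]

lemma inversions_mul_swap {σ : Perm (Fin n)} {i j : Fin n} (hij : (i : ℕ) + 1 = j)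
    (hd : σ j < σ i) : inversions (σ * swap i j) = (inversions σ).erase (σ j, σ i) := by
  ext ⟨a, b⟩
  obtain ⟨p, rfl⟩ := σ.surjective a
  obtain ⟨q, rfl⟩ := σ.surjective b
  simp only [mem_inversions, Finset.mem_erase, mul_inv_rev, swap_inv, coe_mul,
    Function.comp_apply, coe_inv, symm_apply_apply, ne_eq, Prod.mk.injEq,
    EmbeddingLike.apply_eq_iff_eq]
  grind

lemma descent_mem_inversions {σ : Perm (Fin n)} {i j : Fin n} (hij : (i : ℕ) + 1 = j)
    (hd : σ j < σ i) : (σ j, σ i) ∈ inversions σ := by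
  simp [hd, Fin.lt_def, ← hij]

lemma exists_descent_notMem_inversions {π σ : Perm (Fin n)}
    (hsub : inversions π ⊆ inversions σ) (hne : π ≠ σ) :
    ∃ i j : Fin n, (i : ℕ) + 1 = j ∧ σ j < σ i ∧ (σ j, σ i) ∉ inversions π := by
  by_contra! hdesc
  -- Otherwise `π⁻¹ * σ` increases at every step: at a descent of `σ` by `hdesc`, at an ascent
  -- because the ascent is not an inversion of `σ`, hence not one of `π`.
  apply hne
  suffices hmono : StrictMono (π⁻¹ * σ) by
    ext x : 1
    simpa using congrArg π (hmono.apply_eq (x := x)).symm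
  cases n with
  | zero => exact Subsingleton.strictMono _
  | succ n =>
    rw [Fin.strictMono_iff_lt_succ]
    intro i
    have hlt : i.castSucc < i.succ := Fin.castSucc_lt_succ
    have hne : σ i.castSucc ≠ σ i.succ := σ.injective.ne hlt.ne
    rcases hne.lt_or_gt with hasc | hdes
    · have hnot : (σ i.castSucc, σ i.succ) ∉ inversions π := fun h =>
        by simpa [hlt.not_gt] using hsub h
      simp only [mem_inversions, not_and, not_lt] at hnot
      exact (hnot hasc).lt_of_ne (by simpa using hlt.ne)
    · simpa using (mem_inversions.mp (hdesc _ _ (by simp) hdes)).2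

section Pattern

variable {k : ℕ} (e : Fin k ↪o Fin n) (w : Perm (Fin n))

def patternPositions : Finset (Fin n) :=
  Finset.univ.map (e.toEmbedding.trans (w⁻¹).toEmbedding)

lemma card_patternPositions : (patternPositions e w).card = k := by
  simp [patternPositions]

lemma mem_patternPositions {p : Fin n} : p ∈ patternPositions e w ↔ w p ∈ Set.range e := by
  simp [patternPositions, Equiv.symm_apply_eq]

lemma inv_apply_mem_patternPositions (a : Fin k) : w⁻¹ (e a) ∈ patternPositions e w := by
  simp [mem_patternPositions]

def patternRank (a : Fin k) : Fin k :=
  ((patternPositions e w).orderIsoOfFin (card_patternPositions e w)).symm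
    ⟨w⁻¹ (e a), inv_apply_mem_patternPositions e w a⟩

lemma orderEmbOfFin_patternRank (a : Fin k) :
    (patternPositions e w).orderEmbOfFin (card_patternPositions e w) (patternRank e w a) =
      w⁻¹ (e a) := by
  simp [patternRank, ← Finset.coe_orderIsoOfFin_apply]

variable {e w} in
lemma patternRank_lt_patternRank_iff {a b : Fin k} :
    patternRank e w a < patternRank e w b ↔ w⁻¹ (e a) < w⁻¹ (e b) := by
  simp [patternRank]

lemma patternRank_injective : Function.Injective (patternRank e w) := fun a b h => by
  have h' := congrArg ((patternPositions e w).orderEmbOfFin (card_patternPositions e w)) h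
  rw [orderEmbOfFin_patternRank, orderEmbOfFin_patternRank] at h'
  exact e.injective (w⁻¹.injective h')

/-- The permutation of `Fin k` whose one-line notation is order-isomorphic to the subsequence of
`w` formed by the values in the range of `e`. -/
noncomputable def pattern : Perm (Fin k) :=
  (Equiv.ofBijective _ (Finite.injective_iff_bijective.mp (patternRank_injective e w))).symm

lemma pattern_inv_apply (a : Fin k) : (pattern e w)⁻¹ a = patternRank e w a := rfl

variable {e w} in
lemma mem_inversions_pattern {a b : Fin k} :
    (a, b) ∈ inversions (pattern e w) ↔ (e a, e b) ∈ inversions w := by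
  simp [pattern_inv_apply, patternRank_lt_patternRank_iff]

end Pattern

lemma inv_apply_eq_of_pattern_eq {k : ℕ} (e : Fin k ↪o Fin n) {v w : Perm (Fin n)}
    (hpos : patternPositions e v = patternPositions e w) (hpat : pattern e v = pattern e w)
    (a : Fin k) : v⁻¹ (e a) = w⁻¹ (e a) := by
  rw [← orderEmbOfFin_patternRank, ← orderEmbOfFin_patternRank, ← pattern_inv_apply,
    ← pattern_inv_apply, hpat]
  congr 1
  simp only [hpos]

lemma patternPositions_natAdd {n₁ n₂ : ℕ} (w : Perm (Fin (n₁ + n₂))) :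
    patternPositions (Fin.natAddOrderEmb n₁) w =
      (patternPositions (Fin.castAddOrderEmb n₂) w)ᶜ := by
  ext p
  rw [Finset.mem_compl, mem_patternPositions, mem_patternPositions]
  induction w p using Fin.addCases <;> simp [Fin.ext_iff] <;> omega

lemma eq_of_patterns_eq {n₁ n₂ : ℕ} {v w : Perm (Fin (n₁ + n₂))}
    (hpos : patternPositions (Fin.natAddOrderEmb n₁) v =
      patternPositions (Fin.natAddOrderEmb n₁) w)
    (hlow : pattern (Fin.castAddOrderEmb n₂) v = pattern (Fin.castAddOrderEmb n₂) w)
    (hhigh : pattern (Fin.natAddOrderEmb n₁) v = pattern (Fin.natAddOrderEmb n₁) w) :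
    v = w := by
  have hpos' : patternPositions (Fin.castAddOrderEmb n₂) v =
      patternPositions (Fin.castAddOrderEmb n₂) w :=
    compl_injective (by rwa [← patternPositions_natAdd, ← patternPositions_natAdd])
  refine inv_injective (Equiv.ext fun x => ?_)
  induction x using Fin.addCases with
  | left a => exact inv_apply_eq_of_pattern_eq _ hpos' hlow a
  | right a => exact inv_apply_eq_of_pattern_eq _ hpos hhigh a

end Equiv.Perm

open Equiv Perm
open scoped Nat

section WeakBruhat

variable {n : ℕ}

lemma WeakLE.inversions_subset {π σ : Perm (Fin n)} (h : WeakLE π σ) :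
    inversions π ⊆ inversions σ := by
  induction h with
  | refl => rfl
  | tail _ hred ih =>
    obtain ⟨i, j, hij, hd, rfl⟩ := hred
    exact (inversions_mul_swap hij hd ▸ Finset.erase_subset _ _).trans ih

lemma weakLE_of_inversions_subset {π σ : Perm (Fin n)} (h : inversions π ⊆ inversions σ) :
    WeakLE π σ := by
  by_cases hπσ : π = σ
  · exact hπσ ▸ .refl
  obtain ⟨i, j, hij, hd, hnot⟩ := exists_descent_notMem_inversions h hπσ
  have h' : inversions π ⊆ inversions (σ * swap i j) := by
    rw [inversions_mul_swap hij hd]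
    exact Finset.subset_erase.mpr ⟨h, hnot⟩
  exact .head ⟨i, j, hij, hd, rfl⟩ (weakLE_of_inversions_subset h')
termination_by (inversions σ).card
decreasing_by
  rw [inversions_mul_swap hij hd]
  exact Finset.card_erase_lt_of_mem (descent_mem_inversions hij hd)

theorem weakLE_iff_inversions_subset {π σ : Perm (Fin n)} :
    WeakLE π σ ↔ inversions π ⊆ inversions σ :=
  ⟨WeakLE.inversions_subset, weakLE_of_inversions_subset⟩

lemma WeakLE.pattern {k : ℕ} (e : Fin k ↪o Fin n) {π σ : Perm (Fin n)} (h : WeakLE π σ) :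
    WeakLE (pattern e π) (pattern e σ) := by
  rw [weakLE_iff_inversions_subset] at h ⊢
  rintro ⟨a, b⟩ hab
  exact mem_inversions_pattern.mpr (h (mem_inversions_pattern.mp hab))


end WeakBruhat

abbrev ComparablePairs (n : ℕ) := {p : Perm (Fin n) × Perm (Fin n) // WeakLE p.1 p.2}

lemma card_comparablePairs_add_le (n₁ n₂ : ℕ) :
    Nat.card (ComparablePairs (n₁ + n₂)) ≤
      Nat.card (ComparablePairs n₁) * Nat.card (ComparablePairs n₂) * (n₁ + n₂).choose n₂ ^ 2 := by
  let Positions := {s : Finset (Fin (n₁ + n₂)) // s.card = n₂}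
  let positions (w : Perm (Fin (n₁ + n₂))) : Positions :=
    ⟨patternPositions (Fin.natAddOrderEmb n₁) w, card_patternPositions _ _⟩
  let F : ComparablePairs (n₁ + n₂) →
      ComparablePairs n₁ × ComparablePairs n₂ × Positions × Positions := fun p =>
    (⟨(pattern (Fin.castAddOrderEmb n₂) p.1.1, pattern (Fin.castAddOrderEmb n₂) p.1.2),
        p.2.pattern _⟩,
      ⟨(pattern (Fin.natAddOrderEmb n₁) p.1.1, pattern (Fin.natAddOrderEmb n₁) p.1.2),
        p.2.pattern _⟩,
      positions p.1.1, positions p.1.2)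
  have hF : Function.Injective F := by
    rintro ⟨⟨π, σ⟩, _⟩ ⟨⟨π', σ'⟩, _⟩ hFeq
    simp only [F, positions, Prod.mk.injEq, Subtype.mk.injEq] at hFeq
    obtain ⟨⟨hπ₁, hσ₁⟩, ⟨hπ₂, hσ₂⟩, hπ, hσ⟩ := hFeq
    exact Subtype.ext (Prod.ext
      (eq_of_patterns_eq (congrArg Subtype.val hπ) hπ₁ hπ₂)
      (eq_of_patterns_eq (congrArg Subtype.val hσ) hσ₁ hσ₂))
  calc Nat.card (ComparablePairs (n₁ + n₂))
      ≤ Nat.card (ComparablePairs n₁ × ComparablePairs n₂ × Positions × Positions) :=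
        Nat.card_le_card_of_injective F hF
    _ = _ := by
      rw [Nat.card_prod, Nat.card_prod, Nat.card_prod, Nat.card_eq_fintype_card (α := Positions),
        Fintype.card_finset_len, Fintype.card_fin]
      ring

lemma Pstar_pos (n : ℕ) : 0 < Pstar n := by
  have : Nonempty (ComparablePairs n) := ⟨⟨(1, 1), .refl⟩⟩
  have := Nat.card_pos (α := ComparablePairs n)
  unfold Pstar
  positivity

lemma Pstar_add_le (n₁ n₂ : ℕ) : Pstar (n₁ + n₂) ≤ Pstar n₁ * Pstar n₂ := by
  have hcard := card_comparablePairs_add_le n₁ n₂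
  have hn₁ := n₁.factorial_pos
  have hn₂ := n₂.factorial_pos
  have hchoose := Nat.choose_pos (Nat.le_add_left n₂ n₁)
  calc Pstar (n₁ + n₂)
      = Nat.card (ComparablePairs (n₁ + n₂)) /
          (((n₁ + n₂).choose n₂ * n₁ ! * n₂ ! : ℕ) : ℝ) ^ 2 := by
        rw [Nat.add_choose_mul_factorial_mul_factorial]; rfl
    _ ≤ (Nat.card (ComparablePairs n₁) * Nat.card (ComparablePairs n₂) *
          (n₁ + n₂).choose n₂ ^ 2 : ℕ) /
          (((n₁ + n₂).choose n₂ * n₁ ! * n₂ ! : ℕ) : ℝ) ^ 2 := by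
        gcongr
    _ = Pstar n₁ * Pstar n₂ := by
        unfold Pstar
        push_cast
        field_simp

open Filter Topology Real in
/-- Via `Subadditive.eventually_div_lt_of_div_lt` for `log ∘ a`, which needs no lower bound: the
limit may be `0`. -/
theorem tendsto_rpow_one_div_iInf_of_submultiplicative {a : ℕ → ℝ} (hpos : ∀ n, 0 < a n)
    (hmul : ∀ m n, a (m + n) ≤ a m * a n) :
    Tendsto (fun n : ℕ => a n ^ ((1 : ℝ) / (n : ℝ))) atTop
      (𝓝 (⨅ n : ℕ, a (n + 1) ^ ((1 : ℝ) / ((n : ℝ) + 1)))) := by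
  set f : ℕ → ℝ := fun n => a n ^ ((1 : ℝ) / (n : ℝ))
  have hf : ∀ n, f n = exp (log (a n) / n) := fun n => by
    simp only [f, rpow_def_of_pos (hpos n), mul_one_div]
  have hlog : Subadditive fun n => log (a n) := fun m n => by
    rw [← log_mul (hpos m).ne' (hpos n).ne']
    exact log_le_log (hpos _) (hmul m n)
  have hinf : (⨅ n : ℕ, a (n + 1) ^ ((1 : ℝ) / ((n : ℝ) + 1))) = ⨅ n : ℕ, f (n + 1) := by
    simp [f]
  have hbdd : BddBelow (Set.range fun n => f (n + 1)) := ⟨0, by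
    rintro _ ⟨n, rfl⟩
    exact (rpow_pos_of_pos (hpos _) _).le⟩
  rw [hinf]
  refine tendsto_order.2 ⟨fun l hl => ?_, fun L hL => ?_⟩
  · filter_upwards [eventually_ge_atTop 1] with n hn
    obtain ⟨m, rfl⟩ := Nat.exists_eq_add_of_le' hn
    exact hl.trans_le (ciInf_le hbdd m)
  · obtain ⟨m, hm⟩ := exists_lt_of_ciInf_lt hL
    have hL₀ : 0 < L := (rpow_pos_of_pos (hpos _) _).trans hm
    have hm' : log (a (m + 1)) / (m + 1 : ℕ) < log L := by
      rw [lt_log_iff_exp_lt hL₀, ← hf]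
      exact hm
    filter_upwards [hlog.eventually_div_lt_of_div_lt m.succ_ne_zero hm'] with n hn
    rw [hf, ← lt_log_iff_exp_lt hL₀]
    exact hn

theorem weak_bruhat_submultiplicative :
    (∀ n₁ n₂ : ℕ, 1 ≤ n₁ → 1 ≤ n₂ → Pstar (n₁ + n₂) ≤ Pstar n₁ * Pstar n₂) ∧
    Filter.Tendsto (fun n : ℕ => Pstar n ^ ((1 : ℝ) / (n : ℝ))) Filter.atTop
      (nhds (⨅ n : ℕ, Pstar (n + 1) ^ ((1 : ℝ) / ((n : ℝ) + 1)))) :=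
  ⟨fun n₁ n₂ _ _ => Pstar_add_le n₁ n₂,
    tendsto_rpow_one_div_iInf_of_submultiplicative Pstar_pos Pstar_add_le⟩
end

section
/- Let n ≥ 1, k ∈ [n], and π, σ ∈ S_n. Suppose (a) for every r ∈ [k] and every c ∈ [n], #{t ∈ [n] : t ≥ c and π(t) > n − r} ≥ #{t ∈ [n] : t ≥ c and σ(t) > n − r} (every northeastern submatrix of the superimposed permutation matrices with at most k rows contains at least as many crosses as balls), and (b) π^{k*} ≤_M σ^{k*} in S_{n−k}. Then π ≤_M σ. -/
/-- The `(0,1)`-matrix criterion order on `S_n` (which coincides with the strong Bruhat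
order): `π ≤_M σ` iff for every `r, c ∈ [n]` the northeastern submatrix with `r` rows and
columns `c, …, n` contains at least as many crosses (entries of `π`) as balls (entries
of `σ`).  Positions and values are `1`-indexed: the `1`-indexed value of `t : Fin n` is
`(t : ℕ) + 1`. -/
def MatLE {n : ℕ} (π σ : Equiv.Perm (Fin n)) : Prop :=
  ∀ r c : ℕ, r ∈ Finset.Icc 1 n → c ∈ Finset.Icc 1 n →
    (Finset.univ.filter fun t : Fin n => c ≤ (t : ℕ) + 1 ∧ n - r < (σ t : ℕ) + 1).card ≤
    (Finset.univ.filter fun t : Fin n => c ≤ (t : ℕ) + 1 ∧ n - r < (π t : ℕ) + 1).card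

/-!
For `r > k` rows, the entries of a permutation `e` in the northeastern submatrix split into
the `B_e` entries lying in the top `k` rows and the remaining ones, which are exactly the
entries of `e^{k*}` in its northeastern submatrix with `r - k` rows, starting at the column
`m_e = c - k + B_e` (the small values to the left of column `c` are the `c` columns minus
the `k - B_e` top entries there). By (a), `B_σ ≤ B_π`, so `m_π - m_σ = B_π - B_σ`. By (b),
`σ^{k*}` has at most as many entries as `π^{k*}` from column `m_σ` on, and moving that
column to `m_π` loses at most `m_π - m_σ` entries of `π^{k*}`, which the top rows make up.
-/

open Finset

theorem le_iff_card_filter_lt_le {ι α : Type*} [LinearOrder α] (s : Finset ι) (f : ι → α)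
    {j : ι} (hj : j ∈ s) (c : α) :
    c ≤ f j ↔ #{x ∈ s | f x < c} ≤ #{x ∈ s | f x < f j} := by
  refine ⟨fun h => card_le_card (monotone_filter_right s fun x _ hx => hx.trans_le h), ?_⟩
  contrapose!
  intro h
  refine card_lt_card ((ssubset_iff_of_subset ?_).2 ⟨j, ?_, ?_⟩)
  · exact monotone_filter_right s fun x _ hx => hx.trans h
  · simpa [hj] using h
  · simp

theorem Fin.val_eq_card_filter_lt_of_lt_iff {d : ℕ} {α : Type*} [LinearOrder α]
    (p : Equiv.Perm (Fin d)) (f : Fin d → α) (h : ∀ i j, p i < p j ↔ f i < f j) (i : Fin d) :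
    (p i : ℕ) = #{j | f j < f i} := by
  simp_rw [← h]
  rw [← Fin.card_Iio (p i)]
  exact card_equiv p.symm (by simp)

theorem Fin.card_filter_eq_card_filter_le_add {n d : ℕ} (hd : d ≤ n) (P : Fin n → Prop)
    [DecidablePred P] :
    #{j | P j} = #{j : Fin n | d ≤ (j : ℕ) ∧ P j} + #{j : Fin d | P (Fin.castLE hd j)} := by
  rw [← card_filter_add_card_filter_not (p := fun j : Fin n => d ≤ (j : ℕ)), filter_filter,
    filter_filter, ← card_map (Fin.castLEEmb hd)]
  congr 2
  · ext j
    simp only [mem_filter, and_comm]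
  · ext j
    simp only [mem_filter, mem_univ, true_and, mem_map, Fin.castLEEmb_apply, not_le]
    constructor
    · rintro ⟨hP, hj⟩
      exact ⟨⟨j, hj⟩, hP, rfl⟩
    · rintro ⟨i, hP, rfl⟩
      exact ⟨hP, i.isLt⟩

variable {n : ℕ}

/-- `0`-indexed: `neCount e (c - 1) (n - r)` is the count in the northeastern submatrix of
`MatLE` with `r` rows and columns `c, …, n`. -/
def neCount (e : Equiv.Perm (Fin n)) (c v : ℕ) : ℕ :=
  #{t : Fin n | c ≤ (t : ℕ) ∧ v ≤ (e t : ℕ)}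

theorem neCount_eq_card_values (e : Equiv.Perm (Fin n)) (c v : ℕ) :
    neCount e c v = #{j : Fin n | v ≤ (j : ℕ) ∧ c ≤ (e⁻¹ j : ℕ)} :=
  card_equiv e (by simp [and_comm])

theorem neCount_eq_zero_of_le (e : Equiv.Perm (Fin n)) {c v : ℕ} (h : n ≤ c ∨ n ≤ v) :
    neCount e c v = 0 := by
  rw [neCount, card_eq_zero, filter_eq_empty_iff]
  intro t _
  have := t.isLt
  have := (e t).isLt
  omega

theorem neCount_le_neCount_add (e : Equiv.Perm (Fin n)) (c c' v : ℕ) :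
    neCount e c v ≤ neCount e c' v + (c' - c) := by
  have hmid : #{t : Fin n | c ≤ (t : ℕ) ∧ (t : ℕ) < c'} ≤ c' - c := by
    rw [← Nat.card_Ico, ← card_map Fin.valEmbedding]
    exact card_le_card fun x => by
      simp only [mem_map, mem_filter, mem_univ, true_and, Fin.valEmbedding_apply, mem_Ico,
        forall_exists_index, and_imp]
      omega
  calc neCount e c v
      ≤ #(({t | c' ≤ (t : ℕ) ∧ v ≤ (e t : ℕ)} : Finset (Fin n)) ∪
          ({t | c ≤ (t : ℕ) ∧ (t : ℕ) < c'} : Finset (Fin n))) :=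
        card_le_card fun t => by simp only [mem_filter, mem_univ, true_and, mem_union]; omega
    _ ≤ neCount e c' v + #{t : Fin n | c ≤ (t : ℕ) ∧ (t : ℕ) < c'} := card_union_le _ _
    _ ≤ neCount e c' v + (c' - c) := by gcongr

theorem card_filter_eq_neCount (e : Equiv.Perm (Fin n)) (r c : ℕ) :
    (univ.filter fun t : Fin n => c ≤ (t : ℕ) + 1 ∧ n - r < (e t : ℕ) + 1).card
      = neCount e (c - 1) (n - r) := by
  unfold neCount
  congr 1
  ext t
  simp only [mem_filter, mem_univ, true_and]
  omega

theorem forall_card_filter_le_iff_neCount_le (k : ℕ) (π σ : Equiv.Perm (Fin n)) :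
    (∀ r c : ℕ, r ∈ Icc 1 k → c ∈ Icc 1 n →
      (univ.filter fun t : Fin n => c ≤ (t : ℕ) + 1 ∧ n - r < (σ t : ℕ) + 1).card ≤
      (univ.filter fun t : Fin n => c ≤ (t : ℕ) + 1 ∧ n - r < (π t : ℕ) + 1).card) ↔
    ∀ c v, n - k ≤ v → neCount σ c v ≤ neCount π c v := by
  simp only [card_filter_eq_neCount, mem_Icc]
  constructor
  · intro h c v hv
    by_cases hcv : c < n ∧ v < n
    · simpa [show n - (n - v) = v by omega] using h (n - v) (c + 1) (by omega) (by omega)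
    · rw [neCount_eq_zero_of_le σ (by omega)]
      exact Nat.zero_le _
  · exact fun h r c hr _ => h _ _ (by omega)

theorem matLE_iff (π σ : Equiv.Perm (Fin n)) :
    MatLE π σ ↔ ∀ c v, neCount σ c v ≤ neCount π c v := by
  have h := forall_card_filter_le_iff_neCount_le n π σ
  simp only [Nat.sub_self, zero_le, forall_const] at h
  exact h

theorem exists_neCount_eq_add_neCount {k : ℕ} (hkn : k ≤ n) (e : Equiv.Perm (Fin n))
    (ek : Equiv.Perm (Fin (n - k)))
    (hek : ∀ i j : Fin (n - k), ek⁻¹ i < ek⁻¹ j ↔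
      e⁻¹ (Fin.castLE (Nat.sub_le n k) i) < e⁻¹ (Fin.castLE (Nat.sub_le n k) j))
    (c : ℕ) {v : ℕ} (hv : v ≤ n - k) :
    ∃ m, m + k = min n c + neCount e c (n - k) ∧
      neCount e c v = neCount e c (n - k) + neCount ek m v := by
  set f : Fin (n - k) → ℕ := fun j => e⁻¹ (Fin.castLE (Nat.sub_le n k) j)
  have hrank (j : Fin (n - k)) : (ek⁻¹ j : ℕ) = #{j' | f j' < f j} :=
    Fin.val_eq_card_filter_lt_of_lt_iff ek⁻¹ f (fun i j => (hek i j).trans Fin.lt_def) j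
  refine ⟨#{j | f j < c}, ?_, ?_⟩
  · have hsplit := Fin.card_filter_eq_card_filter_le_add (Nat.sub_le n k)
      (fun j => (e⁻¹ j : ℕ) < c)
    have hleft : #{j : Fin n | (e⁻¹ j : ℕ) < c} = min n c := by
      rw [← Fin.card_filter_val_lt]
      exact card_equiv e⁻¹ (by simp)
    have hbig : #{j : Fin n | n - k ≤ (j : ℕ)} = k := by
      have h := card_filter_add_card_filter_not (s := univ) fun j : Fin n => (j : ℕ) < n - k
      simp only [Fin.card_filter_val_lt, not_lt, card_univ, Fintype.card_fin] at h
      omega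
    have htop := card_filter_add_card_filter_not (s := {j : Fin n | n - k ≤ (j : ℕ)})
      fun j => (e⁻¹ j : ℕ) < c
    simp only [filter_filter, not_lt] at htop
    rw [neCount_eq_card_values]
    simp only [f] at hsplit ⊢
    omega
  · rw [neCount_eq_card_values e, Fin.card_filter_eq_card_filter_le_add (Nat.sub_le n k),
      neCount_eq_card_values e, neCount_eq_card_values ek]
    congr 1
    · congr 1
      ext j
      simp only [mem_filter, mem_univ, true_and]
      omega
    · congr 1
      ext j
      simp only [mem_filter, mem_univ, true_and, Fin.val_castLE, hrank]
      exact and_congr_right' (le_iff_card_filter_lt_le univ f (mem_univ j) c)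

theorem top_k_rows_lemma_general (n k : ℕ) (hkn : k ≤ n)
    (π σ : Equiv.Perm (Fin n)) (πk σk : Equiv.Perm (Fin (n - k)))
    -- `πk = π^{k*}`: the permutation of `[n-k]` obtained from `π` by deleting the `k`
    -- largest entries, characterized by preservation of the relative order of positions
    (hπk : ∀ i j : Fin (n - k),
      πk⁻¹ i < πk⁻¹ j ↔ π⁻¹ (Fin.castLE (Nat.sub_le n k) i) < π⁻¹ (Fin.castLE (Nat.sub_le n k) j))
    -- `σk = σ^{k*}`
    (hσk : ∀ i j : Fin (n - k),
      σk⁻¹ i < σk⁻¹ j ↔ σ⁻¹ (Fin.castLE (Nat.sub_le n k) i) < σ⁻¹ (Fin.castLE (Nat.sub_le n k) j))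
    -- (a) every northeastern submatrix with at most `k` rows has at least as many
    -- crosses as balls
    (ha : ∀ r c : ℕ, r ∈ Finset.Icc 1 k → c ∈ Finset.Icc 1 n →
      (Finset.univ.filter fun t : Fin n => c ≤ (t : ℕ) + 1 ∧ n - r < (σ t : ℕ) + 1).card ≤
      (Finset.univ.filter fun t : Fin n => c ≤ (t : ℕ) + 1 ∧ n - r < (π t : ℕ) + 1).card)
    -- (b) `π^{k*} ≤_M σ^{k*}`
    (hb : MatLE πk σk) :
    MatLE π σ := by
  have htop := (forall_card_filter_le_iff_neCount_le k π σ).1 ha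
  rw [matLE_iff] at hb ⊢
  intro c v
  rcases le_or_gt (n - k) v with hv | hv
  · exact htop c v hv
  obtain ⟨mπ, hmπ, hπ⟩ := exists_neCount_eq_add_neCount hkn π πk hπk c hv.le
  obtain ⟨mσ, hmσ, hσ⟩ := exists_neCount_eq_add_neCount hkn σ σk hσk c hv.le
  have hbig := htop c (n - k) le_rfl
  calc neCount σ c v = neCount σ c (n - k) + neCount σk mσ v := hσ
    _ ≤ neCount σ c (n - k) + neCount πk mσ v := by gcongr; exact hb mσ v
    _ ≤ neCount σ c (n - k) + (neCount πk mπ v + (mπ - mσ)) := by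
      gcongr; exact neCount_le_neCount_add πk mσ mπ v
    _ = neCount π c v := by omega

theorem top_k_rows_lemma (n k : ℕ) (hk1 : 1 ≤ k) (hkn : k ≤ n)
    (π σ : Equiv.Perm (Fin n)) (πk σk : Equiv.Perm (Fin (n - k)))
    -- `πk = π^{k*}`: the permutation of `[n-k]` obtained from `π` by deleting the `k`
    -- largest entries, characterized by preservation of the relative order of positions
    (hπk : ∀ i j : Fin (n - k),
      πk⁻¹ i < πk⁻¹ j ↔ π⁻¹ (Fin.castLE (Nat.sub_le n k) i) < π⁻¹ (Fin.castLE (Nat.sub_le n k) j))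
    -- `σk = σ^{k*}`
    (hσk : ∀ i j : Fin (n - k),
      σk⁻¹ i < σk⁻¹ j ↔ σ⁻¹ (Fin.castLE (Nat.sub_le n k) i) < σ⁻¹ (Fin.castLE (Nat.sub_le n k) j))
    -- (a) every northeastern submatrix with at most `k` rows has at least as many
    -- crosses as balls
    (ha : ∀ r c : ℕ, r ∈ Finset.Icc 1 k → c ∈ Finset.Icc 1 n →
      (Finset.univ.filter fun t : Fin n => c ≤ (t : ℕ) + 1 ∧ n - r < (σ t : ℕ) + 1).card ≤
      (Finset.univ.filter fun t : Fin n => c ≤ (t : ℕ) + 1 ∧ n - r < (π t : ℕ) + 1).card)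
    -- (b) `π^{k*} ≤_M σ^{k*}`
    (hb : MatLE πk σk) :
    MatLE π σ :=
  top_k_rows_lemma_general n k hkn π σ πk σk hπk hσk ha hb
end

section
/- The sequence Q_k := N_k / (2k)! is supermultiplicative: for all integers k₁, k₂ ≥ 1, N_{k₁+k₂} / (2(k₁+k₂))! ≥ (N_{k₁} / (2k₁)!) · (N_{k₂} / (2k₂)!). Consequently, lim_{k→∞} (Q_k)^{1/k} exists and equals sup_{k ≥ 1} (Q_k)^{1/k}. -/
/-- `N_k`: the number of bijections `f` from `{u₁,…,u_k, v₁,…,v_k}` (encoded as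
`Fin k ⊕ Fin k`, with `u_i = Sum.inl i` and `v_i = Sum.inr i`) onto `[2k]` such that for
every `j` and every threshold `t`, the number of `u_1,…,u_j` with value at most `t` never
exceeds the number of `v_1,…,v_j` with value at most `t`. -/
noncomputable def Ncount (k : ℕ) : ℕ :=
  Nat.card {f : (Fin k ⊕ Fin k) ≃ Fin (2 * k) //
    ∀ j : Fin k, ∀ t : Fin (2 * k),
      (Finset.univ.filter fun i : Fin k => i ≤ j ∧ f (Sum.inl i) ≤ t).card ≤
      (Finset.univ.filter fun i : Fin k => i ≤ j ∧ f (Sum.inr i) ≤ t).card}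

/-!
Taking logarithms, `Q_{k₁} Q_{k₂} ≤ Q_{k₁+k₂}` says that `-log Q_k` is subadditive, and the limit
statement is Fekete's lemma.

For supermultiplicativity, merge valid bijections `f₁, f₂` of sizes `k₁, k₂` along a `2k₁`-subset
`S` of `[2(k₁+k₂)]`: the first `k₁` pairs take their values in `S` and the last `k₂` pairs in `Sᶜ`,
in the relative orders given by `f₁` and `f₂`. Counting values below `c` in the merged bijection is
counting values below `#{s ∈ S | s < c}` in `f₁` and below `#{s ∈ Sᶜ | s < c}` in `f₂`, so the
merged bijection is valid; it also determines `S`, `f₁` and `f₂`. Hence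
`N_{k₁} N_{k₂} C(2(k₁+k₂), 2k₁) ≤ N_{k₁+k₂}`, which is the inequality for `Q`.
-/

open Finset Filter Topology

theorem tendsto_rpow_one_div_of_supermultiplicative {a : ℕ → ℝ} (hpos : ∀ n, 0 < a n)
    (hmul : ∀ m n, a m * a n ≤ a (m + n))
    (hbdd : BddAbove (Set.range fun n : ℕ => a n ^ ((1 : ℝ) / n))) :
    Tendsto (fun n : ℕ => a n ^ ((1 : ℝ) / n)) atTop
      (𝓝 (⨆ n : ℕ, a (n + 1) ^ ((1 : ℝ) / ((n : ℝ) + 1)))) := by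
  set u : ℕ → ℝ := fun n => -Real.log (a n)
  have hsub : Subadditive u := fun m n => by
    have := Real.log_le_log (mul_pos (hpos m) (hpos n)) (hmul m n)
    rw [Real.log_mul (hpos m).ne' (hpos n).ne'] at this
    simp only [u]
    linarith
  have hroot (n : ℕ) : a n ^ ((1 : ℝ) / n) = Real.exp (-(u n / n)) := by
    rw [Real.rpow_def_of_pos (hpos n)]
    simp only [u]
    ring_nf
  have hbdd' : BddBelow (Set.range fun n => u n / n) := by
    obtain ⟨B, hB⟩ := hbdd
    refine ⟨-Real.log B, ?_⟩
    rintro _ ⟨n, rfl⟩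
    have := Real.log_le_log (Real.exp_pos _) ((hroot n).symm.trans_le (hB ⟨n, rfl⟩))
    rw [Real.log_exp] at this
    linarith
  have hlim : Tendsto (fun n : ℕ => a n ^ ((1 : ℝ) / n)) atTop (𝓝 (Real.exp (-hsub.lim))) := by
    simp_rw [hroot]
    exact ((Real.continuous_exp.comp continuous_neg).tendsto _).comp (hsub.tendsto_lim hbdd')
  have hshift (n : ℕ) :
      a (n + 1) ^ ((1 : ℝ) / ((n : ℝ) + 1)) = a (n + 1) ^ ((1 : ℝ) / ↑(n + 1)) := by
    push_cast
    rfl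
  convert hlim using 2
  apply le_antisymm
  · refine ciSup_le fun n => ?_
    rw [hshift, hroot]
    exact Real.exp_le_exp.2 (neg_le_neg (hsub.lim_le_div hbdd' n.succ_ne_zero))
  · refine le_of_tendsto' (hlim.comp (tendsto_add_atTop_nat 1)) fun n => ?_
    refine (hshift n).symm.trans_le
      (le_ciSup (f := fun n : ℕ => a (n + 1) ^ ((1 : ℝ) / ((n : ℝ) + 1))) (hbdd.mono ?_) n)
    rintro _ ⟨n, rfl⟩
    exact ⟨n + 1, (hshift n).symm⟩

theorem Fin.exists_forall_le_iff_val_lt {n c : ℕ} (x : Fin n) (hx : (x : ℕ) < c) :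
    ∃ t : Fin n, ∀ y : Fin n, y ≤ t ↔ (y : ℕ) < c :=
  ⟨⟨min (c - 1) (n - 1), by omega⟩, fun y => by rw [Fin.le_def]; simp; omega⟩

theorem Monotone.lt_iff_val_lt_card {n : ℕ} {β : Type*} [Preorder β] [DecidableLT β]
    {e : Fin n → β} (he : Monotone e) (x : Fin n) (c : β) :
    e x < c ↔ (x : ℕ) < #{y : Fin n | e y < c} := by
  constructor
  · intro hx
    have hsub : Iic x ⊆ univ.filter (fun y => e y < c) := fun y hy => by
      simpa using (he (mem_Iic.1 hy)).trans_lt hx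
    simpa only [Fin.card_Iic, Nat.add_one_le_iff] using card_le_card hsub
  · intro hx
    by_contra hxc
    have hsub : univ.filter (fun y => e y < c) ⊆ Iio x := fun y hy => by
      simp only [mem_filter, mem_univ, true_and] at hy
      exact mem_Iio.2 (lt_of_not_ge fun hxy => hxc ((he hxy).trans_lt hy))
    simpa only [Fin.card_Iio, lt_self_iff_false] using hx.trans_le (card_le_card hsub)

section PrefixDominated

variable {k k₁ k₂ n : ℕ}

/-- Unlike in `Ncount`, the prefix length `m` and the strict threshold `c` range over all of `ℕ`;
this makes the counts additive over concatenation. -/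
def prefixCount (g : Fin k → ℕ) (m c : ℕ) : ℕ :=
  #{i : Fin k | (i : ℕ) < m ∧ g i < c}

def PrefixDominated (f : Fin k ⊕ Fin k → ℕ) : Prop :=
  ∀ m c, prefixCount (f ∘ Sum.inl) m c ≤ prefixCount (f ∘ Sum.inr) m c

theorem prefixDominated_val_iff (f : Fin k ⊕ Fin k → Fin n) :
    PrefixDominated (fun x => (f x : ℕ)) ↔ ∀ j : Fin k, ∀ t : Fin n,
      #{i : Fin k | i ≤ j ∧ f (Sum.inl i) ≤ t} ≤ #{i : Fin k | i ≤ j ∧ f (Sum.inr i) ≤ t} := by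
  constructor
  · intro h j t
    simpa only [prefixCount, Function.comp_apply, Nat.lt_add_one_iff, ← Fin.le_def]
      using h ((j : ℕ) + 1) ((t : ℕ) + 1)
  · intro h m c
    obtain h0 | ⟨i, hi⟩ :=
      (univ.filter fun i : Fin k => (i : ℕ) < m ∧ (f (.inl i) : ℕ) < c).eq_empty_or_nonempty
    · simp [prefixCount, h0]
    simp only [mem_filter, mem_univ, true_and] at hi
    obtain ⟨j, hj⟩ := Fin.exists_forall_le_iff_val_lt i hi.1
    obtain ⟨t, ht⟩ := Fin.exists_forall_le_iff_val_lt (f (.inl i)) hi.2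
    simpa [prefixCount, hj, ht] using h j t

theorem PrefixDominated.comp_monotone {f : Fin k ⊕ Fin k → Fin n}
    (hf : PrefixDominated (fun x => (f x : ℕ))) {e : Fin n → ℕ} (he : Monotone e) :
    PrefixDominated (e ∘ f) := by
  intro m c
  simpa only [prefixCount, Function.comp_apply, ← he.lt_iff_val_lt_card]
    using hf m #{y : Fin n | e y < c}

theorem prefixCount_append (a : Fin k₁ → ℕ) (b : Fin k₂ → ℕ) (m c : ℕ) :
    prefixCount (Fin.append a b) m c = prefixCount a m c + prefixCount b (m - k₁) c := by
  simp only [prefixCount, card_filter, Fin.sum_univ_add, Fin.append_left, Fin.append_right,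
    Fin.val_castAdd, Fin.val_natAdd]
  congr 1
  refine sum_congr rfl fun i _ => if_congr ?_ rfl rfl
  omega

def blockAppend {α : Type*} (g₁ : Fin k₁ ⊕ Fin k₁ → α) (g₂ : Fin k₂ ⊕ Fin k₂ → α) :
    Fin (k₁ + k₂) ⊕ Fin (k₁ + k₂) → α :=
  Sum.elim (Fin.append (g₁ ∘ Sum.inl) (g₂ ∘ Sum.inl)) (Fin.append (g₁ ∘ Sum.inr) (g₂ ∘ Sum.inr))

theorem comp_blockAppend {α β : Type*} (φ : α → β) (g₁ : Fin k₁ ⊕ Fin k₁ → α)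
    (g₂ : Fin k₂ ⊕ Fin k₂ → α) : φ ∘ blockAppend g₁ g₂ = blockAppend (φ ∘ g₁) (φ ∘ g₂) := by
  ext (i | i) <;> induction i using Fin.addCases <;> simp [blockAppend]

theorem PrefixDominated.blockAppend {g₁ : Fin k₁ ⊕ Fin k₁ → ℕ} {g₂ : Fin k₂ ⊕ Fin k₂ → ℕ}
    (h₁ : PrefixDominated g₁) (h₂ : PrefixDominated g₂) :
    PrefixDominated (blockAppend g₁ g₂) := by
  intro m c
  simp only [_root_.blockAppend, Sum.elim_comp_inl, Sum.elim_comp_inr, prefixCount_append]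
  exact add_le_add (h₁ m c) (h₂ (m - k₁) c)

end PrefixDominated

section Merge

variable {k₁ k₂ n₁ n₂ N : ℕ} {S : Finset (Fin N)}

def blockEquiv (k₁ k₂ : ℕ) :
    Fin (k₁ + k₂) ⊕ Fin (k₁ + k₂) ≃ (Fin k₁ ⊕ Fin k₁) ⊕ (Fin k₂ ⊕ Fin k₂) :=
  (Equiv.sumCongr finSumFinEquiv.symm finSumFinEquiv.symm).trans (Equiv.sumSumSumComm _ _ _ _)

def mergeEquiv (hS : #S = n₁) (hSc : #Sᶜ = n₂) (f₁ : Fin k₁ ⊕ Fin k₁ ≃ Fin n₁)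
    (f₂ : Fin k₂ ⊕ Fin k₂ ≃ Fin n₂) : Fin (k₁ + k₂) ⊕ Fin (k₁ + k₂) ≃ Fin N :=
  (blockEquiv k₁ k₂).trans ((Equiv.sumCongr f₁ f₂).trans (finSumEquivOfFinset hS hSc))

variable (hS : #S = n₁) (hSc : #Sᶜ = n₂) (f₁ : Fin k₁ ⊕ Fin k₁ ≃ Fin n₁)
  (f₂ : Fin k₂ ⊕ Fin k₂ ≃ Fin n₂)

theorem coe_mergeEquiv : ⇑(mergeEquiv hS hSc f₁ f₂) =
    blockAppend (S.orderEmbOfFin hS ∘ f₁) (Sᶜ.orderEmbOfFin hSc ∘ f₂) := by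
  ext (i | i) <;> induction i using Fin.addCases <;>
    simp [mergeEquiv, blockEquiv, blockAppend, Equiv.sumSumSumComm]

theorem mergeEquiv_left (x : Fin k₁ ⊕ Fin k₁) :
    mergeEquiv hS hSc f₁ f₂ (Sum.map (Fin.castAdd k₂) (Fin.castAdd k₂) x) =
      S.orderEmbOfFin hS (f₁ x) := by
  cases x <;> simp [coe_mergeEquiv, blockAppend]

theorem mergeEquiv_right (x : Fin k₂ ⊕ Fin k₂) :
    mergeEquiv hS hSc f₁ f₂ (Sum.map (Fin.natAdd k₁) (Fin.natAdd k₁) x) =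
      Sᶜ.orderEmbOfFin hSc (f₂ x) := by
  cases x <;> simp [coe_mergeEquiv, blockAppend]

theorem PrefixDominated.mergeEquiv (h₁ : PrefixDominated fun x => (f₁ x : ℕ))
    (h₂ : PrefixDominated fun x => (f₂ x : ℕ)) :
    PrefixDominated fun x => (mergeEquiv hS hSc f₁ f₂ x : ℕ) := by
  have hmono {n : ℕ} (T : Finset (Fin N)) (hT : #T = n) :
      Monotone fun y => (T.orderEmbOfFin hT y : ℕ) :=
    Fin.val_strictMono.monotone.comp (T.orderEmbOfFin hT).monotone
  change PrefixDominated (Fin.val ∘ _)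
  rw [coe_mergeEquiv, comp_blockAppend]
  exact (h₁.comp_monotone (hmono S hS)).blockAppend (h₂.comp_monotone (hmono Sᶜ hSc))

theorem image_mergeEquiv_left :
    univ.image (fun x => mergeEquiv hS hSc f₁ f₂ (Sum.map (Fin.castAdd k₂) (Fin.castAdd k₂) x))
      = S := by
  simp_rw [mergeEquiv_left]
  rw [← Function.comp_def, ← image_image, image_univ_equiv, image_orderEmbOfFin_univ]

theorem mergeEquiv_injective {T : Finset (Fin N)} (hT : #T = n₁) (hTc : #Tᶜ = n₂)
    (g₁ : Fin k₁ ⊕ Fin k₁ ≃ Fin n₁) (g₂ : Fin k₂ ⊕ Fin k₂ ≃ Fin n₂)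
    (h : mergeEquiv hS hSc f₁ f₂ = mergeEquiv hT hTc g₁ g₂) : S = T ∧ f₁ = g₁ ∧ f₂ = g₂ := by
  obtain rfl : S = T := by
    rw [← image_mergeEquiv_left hS hSc f₁ f₂, ← image_mergeEquiv_left hT hTc g₁ g₂, h]
  refine ⟨rfl, Equiv.ext fun x => ?_, Equiv.ext fun x => ?_⟩
  · apply (S.orderEmbOfFin hS).injective
    rw [← mergeEquiv_left hS hSc, h, mergeEquiv_left]
  · apply (Sᶜ.orderEmbOfFin hSc).injective
    rw [← mergeEquiv_right hS hSc, h, mergeEquiv_right]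

end Merge

abbrev DominatedEquiv (k : ℕ) :=
  {f : (Fin k ⊕ Fin k) ≃ Fin (2 * k) // PrefixDominated fun x => (f x : ℕ)}

theorem Ncount_eq_card (k : ℕ) : Ncount k = Nat.card (DominatedEquiv k) :=
  Nat.card_congr (Equiv.subtypeEquivRight fun f => (prefixDominated_val_iff f).symm)

theorem Ncount_mul_Ncount_mul_choose_le (k₁ k₂ : ℕ) :
    Ncount k₁ * Ncount k₂ * (2 * (k₁ + k₂)).choose (2 * k₁) ≤ Ncount (k₁ + k₂) := by
  have hcompl (S : {S : Finset (Fin (2 * (k₁ + k₂))) // #S = 2 * k₁}) : #S.1ᶜ = 2 * k₂ := by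
    rw [card_compl, Fintype.card_fin, S.2]
    omega
  let merge (p : (DominatedEquiv k₁ × DominatedEquiv k₂) ×
      {S : Finset (Fin (2 * (k₁ + k₂))) // #S = 2 * k₁}) : DominatedEquiv (k₁ + k₂) :=
    ⟨mergeEquiv p.2.2 (hcompl p.2) p.1.1.1 p.1.2.1, p.1.1.2.mergeEquiv _ _ _ _ p.1.2.2⟩
  have hmerge : Function.Injective merge := by
    rintro ⟨⟨⟨f₁, _⟩, ⟨f₂, _⟩⟩, ⟨S, hS⟩⟩ ⟨⟨⟨g₁, _⟩, ⟨g₂, _⟩⟩, ⟨T, hT⟩⟩ h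
    obtain ⟨rfl, rfl, rfl⟩ := mergeEquiv_injective _ _ _ _ _ _ _ _ (congrArg Subtype.val h)
    rfl
  have := Nat.card_le_card_of_injective merge hmerge
  rwa [Nat.card_prod, Nat.card_prod, ← Ncount_eq_card, ← Ncount_eq_card,
    Nat.card_eq_fintype_card, Fintype.card_finset_len, Fintype.card_fin,
    ← Ncount_eq_card] at this

theorem Ncount_pos (k : ℕ) : 0 < Ncount k := by
  -- `v_i ↦ i` and `u_i ↦ k + i`
  let f : (Fin k ⊕ Fin k) ≃ Fin (2 * k) :=
    (Equiv.sumComm _ _).trans (finSumFinEquiv.trans (finCongr (two_mul k).symm))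
  have hf : PrefixDominated fun x => (f x : ℕ) := fun m c =>
    card_le_card fun i => by simp [f]; omega
  have : Nonempty (DominatedEquiv k) := ⟨⟨f, hf⟩⟩
  rw [Ncount_eq_card]
  exact Nat.card_pos

theorem Ncount_le_factorial (k : ℕ) : Ncount k ≤ (2 * k).factorial := by
  rw [Ncount_eq_card]
  refine (Nat.card_le_card_of_injective _ Subtype.val_injective).trans_eq ?_
  rw [Nat.card_eq_fintype_card,
    Fintype.card_equiv (finSumFinEquiv.trans (finCongr (two_mul k).symm)),
    Fintype.card_sum, Fintype.card_fin, two_mul]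

noncomputable def Q (k : ℕ) : ℝ := Ncount k / (2 * k).factorial

theorem Q_pos (k : ℕ) : 0 < Q k := by
  have := Ncount_pos k
  unfold Q
  positivity

theorem Q_le_one (k : ℕ) : Q k ≤ 1 :=
  div_le_one_of_le₀ (mod_cast Ncount_le_factorial k) (Nat.cast_nonneg _)

theorem Q_mul_Q_le (k₁ k₂ : ℕ) : Q k₁ * Q k₂ ≤ Q (k₁ + k₂) := by
  have hfac : (2 * (k₁ + k₂)).factorial =
      (2 * (k₁ + k₂)).choose (2 * k₁) * (2 * k₁).factorial * (2 * k₂).factorial := by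
    rw [← Nat.choose_mul_factorial_mul_factorial (by omega : 2 * k₁ ≤ 2 * (k₁ + k₂))]
    congr 2
    omega
  have hchoose : ((2 * (k₁ + k₂)).choose (2 * k₁) : ℝ) ≠ 0 :=
    mod_cast (Nat.choose_pos (by omega)).ne'
  calc Q k₁ * Q k₂
      = ((Ncount k₁ * Ncount k₂ * (2 * (k₁ + k₂)).choose (2 * k₁) : ℕ) : ℝ) /
          (2 * (k₁ + k₂)).factorial := by
        rw [hfac, Q, Q]
        push_cast
        field_simp
    _ ≤ Q (k₁ + k₂) :=
        div_le_div_of_nonneg_right (mod_cast Ncount_mul_Ncount_mul_choose_le k₁ k₂)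
          (Nat.cast_nonneg _)

theorem Q_supermultiplicative :
    (∀ k₁ k₂ : ℕ, 1 ≤ k₁ → 1 ≤ k₂ →
      (Ncount k₁ : ℝ) / (Nat.factorial (2 * k₁)) *
        ((Ncount k₂ : ℝ) / (Nat.factorial (2 * k₂))) ≤
      (Ncount (k₁ + k₂) : ℝ) / (Nat.factorial (2 * (k₁ + k₂)))) ∧
    Filter.Tendsto
      (fun k : ℕ => ((Ncount k : ℝ) / (Nat.factorial (2 * k))) ^ ((1 : ℝ) / (k : ℝ)))
      Filter.atTop
      (nhds (⨆ k : ℕ,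
        ((Ncount (k + 1) : ℝ) / (Nat.factorial (2 * (k + 1)))) ^ ((1 : ℝ) / ((k : ℝ) + 1)))) := by
  refine ⟨fun k₁ k₂ _ _ => Q_mul_Q_le k₁ k₂,
    tendsto_rpow_one_div_of_supermultiplicative Q_pos Q_mul_Q_le ⟨1, ?_⟩⟩
  rintro _ ⟨k, rfl⟩
  exact Real.rpow_le_one (Q_pos k).le (Q_le_one k) (by positivity)
end

section
/- Let π, σ ∈ S_n with E(π) ⊋ E(σ) (strict containment). Then there exists a position p ∈ [n−1] such that σ(p) > σ(p+1) (i.e. (σ(p), σ(p+1)) is an adjacent inversion of σ) and π⁻¹(σ(p+1)) < π⁻¹(σ(p)) (i.e. the pair (σ(p+1), σ(p)) belongs to E(π)). -/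
/-- The non-inversion set `E(ω) = {(i,j) : i < j, ω⁻¹(i) < ω⁻¹(j)}`. -/
def NonInv {n : ℕ} (ω : Equiv.Perm (Fin n)) : Set (Fin n × Fin n) :=
  {p | p.1 < p.2 ∧ ω⁻¹ p.1 < ω⁻¹ p.2}

/-! Read in positions of `σ`, the hypothesis says that every ascent of `f = σ` is an ascent of
`g = π⁻¹ ∘ σ`, and we look for an adjacent common descent of `f` and `g`. A common descent
`a < b` with a point `c` strictly between splits into a common descent `a < c` or `c < b`,
so shrinking the interval must end at a covering pair. -/

open Finset Function

lemma exists_covBy_of_split {ι : Type*} [Preorder ι] [LocallyFiniteOrder ι] {P : ι → ι → Prop}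
    (h_lt : ∀ {a b}, P a b → a < b)
    (h_split : ∀ {a b c}, P a b → a < c → c < b → P a c ∨ P c b) {a b : ι} (hab : P a b) :
    ∃ p q, p ⋖ q ∧ P p q := by
  induction h : #(Ioo a b) using Nat.strong_induction_on generalizing a b with
  | _ k ih =>
    by_cases hcov : a ⋖ b
    · exact ⟨a, b, hcov, hab⟩
    obtain ⟨c, hac, hcb⟩ := (not_covBy_iff (h_lt hab)).1 hcov
    have hc : c ∈ Ioo a b := mem_Ioo.2 ⟨hac, hcb⟩
    rcases h_split hab hac hcb with hP | hP
    · refine ih _ (h ▸ card_lt_card ?_) hP rfl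
      exact (ssubset_iff_of_subset (Ioo_subset_Ioo_right hcb.le)).2 ⟨c, hc, by simp⟩
    · refine ih _ (h ▸ card_lt_card ?_) hP rfl
      exact (ssubset_iff_of_subset (Ioo_subset_Ioo_left hac.le)).2 ⟨c, hc, by simp⟩

lemma common_descent_split {ι α β : Type*} [Preorder ι] [LinearOrder α] [LinearOrder β]
    {f : ι → α} {g : ι → β} (hf : Injective f)
    (hfg : ∀ {x y}, x < y → f x < f y → g x < g y) {a b c : ι}
    (hab : f b < f a ∧ g b < g a) (hac : a < c) (hcb : c < b) :
    (f c < f a ∧ g c < g a) ∨ (f b < f c ∧ g b < g c) := by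
  rcases lt_or_gt_of_ne (hf.ne hcb.ne) with hfcb | hfbc
  · exact .inl ⟨hfcb.trans hab.1, (hfg hcb hfcb).trans hab.2⟩
  rcases lt_or_gt_of_ne (hf.ne hac.ne') with hfca | hfac
  · rcases lt_or_ge (g c) (g a) with hgca | hgac
    · exact .inl ⟨hfca, hgca⟩
    · exact .inr ⟨hfbc, hab.2.trans_le hgac⟩
  · exact .inr ⟨hfbc, hab.2.trans (hfg hac hfac)⟩

lemma exists_covBy_common_descent {ι α β : Type*} [Preorder ι] [LocallyFiniteOrder ι]
    [LinearOrder α] [LinearOrder β] {f : ι → α} {g : ι → β} (hf : Injective f)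
    (hfg : ∀ {x y}, x < y → f x < f y → g x < g y) {a b : ι} (hab : a < b)
    (hd : f b < f a ∧ g b < g a) :
    ∃ p q, p ⋖ q ∧ f q < f p ∧ g q < g p := by
  obtain ⟨p, q, hpq, -, hd⟩ :=
    exists_covBy_of_split (P := fun a b ↦ a < b ∧ f b < f a ∧ g b < g a) (·.1)
      (fun hab hac hcb ↦ (common_descent_split hf hfg hab.2 hac hcb).imp (⟨hac, ·⟩) (⟨hcb, ·⟩))
      ⟨hab, hd⟩
  exact ⟨p, q, hpq, hd⟩

theorem exists_adjacent_inversion (n : ℕ) (π σ : Equiv.Perm (Fin n))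
    (h : NonInv σ ⊂ NonInv π) :
    ∃ p q : Fin n, (p : ℕ) + 1 = (q : ℕ) ∧ σ q < σ p ∧ π⁻¹ (σ q) < π⁻¹ (σ p) := by
  have hfg : ∀ {x y : Fin n}, x < y → σ x < σ y → π⁻¹ (σ x) < π⁻¹ (σ y) := fun {x y} hxy hσ ↦
    (h.1 (show (σ x, σ y) ∈ NonInv σ by simpa [NonInv] using ⟨hσ, hxy⟩)).2
  obtain ⟨⟨i, j⟩, ⟨hij, hπ⟩, hσ⟩ := Set.exists_of_ssubset h
  have hσ' : σ⁻¹ j < σ⁻¹ i :=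
    lt_of_le_of_ne (not_lt.1 fun hlt ↦ hσ ⟨hij, hlt⟩) (σ⁻¹.injective.ne hij.ne')
  obtain ⟨p, q, hpq, hd⟩ := exists_covBy_common_descent (g := fun x ↦ π⁻¹ (σ x)) σ.injective hfg
    hσ' (by simpa using ⟨hij, hπ⟩)
  exact ⟨p, q, Nat.covBy_iff_add_one_eq.1 (Fin.covBy_iff.1 hpq), hd⟩
end

section
/- Let π, σ ∈ S_n with π ⪯ σ in the weak Bruhat order, and let m ≤ n. Then π[1..m] ⪯ σ[1..m] in the weak Bruhat order on S_m. -/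
/-!
Swapping the adjacent positions `i, i+1` of `ω` either moves a value `> m`, and then `ω[1..m]`
is unchanged, or it swaps two values `a > b` that are both `≤ m`; nothing of `ω[1..m]` lies
between them, so they are adjacent there too and `ω[1..m]` undergoes the corresponding simple
reduction. Restricting every term of a chain from `σ` down to `π` therefore gives a chain from
`σ[1..m]` down to `π[1..m]`.
-/

open Equiv Function

theorem Equiv.eq_of_lt_iff_lt {ι β : Type*} [LinearOrder β] [WellFoundedLT β] {e₁ e₂ : ι ≃ β}
    (h : ∀ x y, e₁ x < e₁ y ↔ e₂ x < e₂ y) : e₁ = e₂ := by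
  have hmono : StrictMono (e₁.symm.trans e₂) := fun u v huv => by
    simpa [← h] using huv
  have hid : ⇑(e₁.symm.trans e₂) = id :=
    (hmono.range_inj strictMono_id).1 (by simp [Set.range_id])
  ext x
  simpa using (congrFun hid (e₁ x)).symm

theorem CovBy.of_lt_iff_lt {α β γ : Type*} [Preorder β] [Preorder γ] {f : α → β} {g : α → γ}
    (hf : Surjective f) (hfg : ∀ x y, f x < f y ↔ g x < g y) {x y : α} (h : g x ⋖ g y) :
    f x ⋖ f y := by
  refine ⟨(hfg x y).2 h.lt, fun c hxc hcy => ?_⟩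
  obtain ⟨z, rfl⟩ := hf c
  exact h.2 ((hfg x z).1 hxc) ((hfg z y).1 hcy)

theorem Equiv.Perm.mul_swap_inv_apply {α : Type*} [DecidableEq α] (σ : Perm α) (a b x : α) :
    (σ * swap a b)⁻¹ x = swap a b (σ⁻¹ x) := by
  simp [mul_inv_rev, Perm.mul_apply]

theorem Equiv.swap_lt_swap_iff_of_covBy {α : Type*} [LinearOrder α] {k l : α} (hkl : k ⋖ l)
    (u v : α) : swap k l u < swap k l v ↔ u < v ∧ ¬(u = k ∧ v = l) ∨ u = l ∧ v = k := by
  have hlt := hkl.lt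
  have hnot_between := hkl.2
  simp only [swap_apply_def]
  split_ifs <;> subst_vars <;> grind

theorem Equiv.swap_lt_swap_iff_of_lt_iff_lt {α β γ : Type*} [LinearOrder β] [LinearOrder γ]
    {f : α → β} {g : α → γ}
    (hf : Injective f) (hg : Injective g) (hfg : ∀ x y, f x < f y ↔ g x < g y) {x₀ x₁ : α}
    (hf₀₁ : f x₀ ⋖ f x₁) (hg₀₁ : g x₀ ⋖ g x₁) (x y : α) :
    swap (f x₀) (f x₁) (f x) < swap (f x₀) (f x₁) (f y) ↔
      swap (g x₀) (g x₁) (g x) < swap (g x₀) (g x₁) (g y) := by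
  simp only [swap_lt_swap_iff_of_covBy hf₀₁, swap_lt_swap_iff_of_covBy hg₀₁, hf.eq_iff, hg.eq_iff,
    hfg]

theorem Equiv.swap_lt_swap_iff_of_ne {β : Type*} [LinearOrder β] {k l u v : β} (hkl : k ⋖ l)
    (hu : u ≠ k) (hv : v ≠ k) : swap k l u < swap k l v ↔ u < v := by
  simp [swap_lt_swap_iff_of_covBy hkl, hu, hv]

/-- `τ = ω[1..m]`. -/
def IsRestriction {n m : ℕ} (h : m ≤ n) (ω : Perm (Fin n)) (τ : Perm (Fin m)) : Prop :=
  ∀ x y : Fin m, τ⁻¹ x < τ⁻¹ y ↔ ω⁻¹ (Fin.castLE h x) < ω⁻¹ (Fin.castLE h y)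

namespace IsRestriction

variable {n m : ℕ} {h : m ≤ n}

theorem unique {ω : Perm (Fin n)} {τ₁ τ₂ : Perm (Fin m)} (h₁ : IsRestriction h ω τ₁)
    (h₂ : IsRestriction h ω τ₂) : τ₁ = τ₂ :=
  inv_inj.1 <| Equiv.eq_of_lt_iff_lt fun x y => (h₁ x y).trans (h₂ x y).symm

theorem exists_of_isSimpleReduction {ω₁ ω₂ : Perm (Fin n)} {τ₁ : Perm (Fin m)}
    (hτ₁ : IsRestriction h ω₁ τ₁) (hω : IsSimpleReduction ω₁ ω₂) :
    ∃ τ₂, Relation.ReflGen IsSimpleReduction τ₁ τ₂ ∧ IsRestriction h ω₂ τ₂ := by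
  obtain ⟨i, j, hadj, hji, rfl⟩ := hω
  have hij : i ⋖ j := by simpa using hadj
  by_cases ha : (ω₁ i : ℕ) < m
  · set a : Fin m := ⟨ω₁ i, ha⟩
    set b : Fin m := ⟨ω₁ j, (Fin.lt_def.1 hji).trans ha⟩
    set g : Fin m → Fin n := fun z => ω₁⁻¹ (Fin.castLE h z)
    have hg : Injective g := ω₁⁻¹.injective.comp (Fin.castLE_injective h)
    have hga : g a = i := by simp [g, a]
    have hgb : g b = j := by simp [g, b]
    have hcov : τ₁⁻¹ a ⋖ τ₁⁻¹ b :=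
      CovBy.of_lt_iff_lt τ₁⁻¹.surjective hτ₁ (by rwa [← hga, ← hgb] at hij)
    refine ⟨τ₁ * swap (τ₁⁻¹ a) (τ₁⁻¹ b),
      .single ⟨_, _, by simpa using hcov, by simpa [a, b] using hji, rfl⟩, fun x y => ?_⟩
    simp only [Perm.mul_swap_inv_apply]
    have := swap_lt_swap_iff_of_lt_iff_lt τ₁⁻¹.injective hg hτ₁ hcov (by rwa [hga, hgb]) x y
    rwa [hga, hgb] at this
  · refine ⟨τ₁, .refl, fun x y => ?_⟩
    have hne : ∀ z : Fin m, ω₁⁻¹ (Fin.castLE h z) ≠ i := fun z hz => by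
      rw [← hz] at ha
      simp at ha
    rw [hτ₁, Perm.mul_swap_inv_apply, Perm.mul_swap_inv_apply,
      swap_lt_swap_iff_of_ne hij (hne x) (hne y)]

theorem exists_of_weakLE {ω₁ ω₂ : Perm (Fin n)} {τ₁ : Perm (Fin m)}
    (hτ₁ : IsRestriction h ω₁ τ₁) (hω : WeakLE ω₂ ω₁) :
    ∃ τ₂, WeakLE τ₂ τ₁ ∧ IsRestriction h ω₂ τ₂ := by
  induction hω with
  | refl => exact ⟨τ₁, .refl, hτ₁⟩
  | tail _ hω ih =>
    obtain ⟨τ, hτ₁τ, hτ⟩ := ih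
    obtain ⟨τ', hττ', hτ'⟩ := hτ.exists_of_isSimpleReduction hω
    exact ⟨τ', hτ₁τ.trans hττ'.to_reflTransGen, hτ'⟩

end IsRestriction

theorem weak_bruhat_restriction (n m : ℕ) (h : m ≤ n)
    (π σ : Equiv.Perm (Fin n)) (πm σm : Equiv.Perm (Fin m))
    -- `πm = π[1..m]`: obtained from `π` by deleting the entries `m+1, …, n`,
    -- characterized by `π[1..m]⁻¹(i) < π[1..m]⁻¹(j) ↔ π⁻¹(i) < π⁻¹(j)` for `i, j ≤ m`
    (hπm : ∀ i j : Fin m, πm⁻¹ i < πm⁻¹ j ↔ π⁻¹ (Fin.castLE h i) < π⁻¹ (Fin.castLE h j))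
    -- `σm = σ[1..m]`
    (hσm : ∀ i j : Fin m, σm⁻¹ i < σm⁻¹ j ↔ σ⁻¹ (Fin.castLE h i) < σ⁻¹ (Fin.castLE h j))
    (hw : WeakLE π σ) :
    WeakLE πm σm := by
  obtain ⟨τ, hτσ, hτ⟩ := IsRestriction.exists_of_weakLE hσm hw
  rwa [hτ.unique hπm] at hτσ
end

section
/- Let π, σ ∈ S_n with π ⪯ σ in the weak Bruhat order. Then for every integer j with 0 ≤ j ≤ n − 1, the position of the element n − j satisfies π⁻¹(n − j) ≥ σ⁻¹(n − j) − j. -/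
/-!
Going down by a simple reduction moves a larger entry to the right past a smaller one, so if
`a < b` and `a` stands to the left of `b`, this stays true all the way down from `σ` to `π`.
Hence the entries smaller than `x` that precede `x` in `σ` still precede it in `π`. Every other
entry preceding `x` in `σ` is larger than `x`, and there are only `j` of those.
-/

open Finset Equiv

theorem Fin.swap_lt_swap_of_lt {n : ℕ} {i j p q : Fin n} (hij : (i : ℕ) + 1 = j)
    (hpq : p < q) (hne : ¬(p = i ∧ q = j)) : swap i j p < swap i j q := by
  rw [Fin.lt_def] at hpq ⊢
  simp only [Fin.ext_iff] at hne
  simp only [swap_apply_def]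
  split_ifs <;> simp only [Fin.ext_iff] at * <;> omega

theorem Equiv.Perm.card_filter_inv_apply_lt {n : ℕ} (ω : Perm (Fin n)) (p : Fin n) :
    #{y | ω⁻¹ y < p} = (p : ℕ) := by
  have : ({y | ω⁻¹ y < p} : Finset (Fin n)) = (Iio p).map ω.toEmbedding := by
    ext y
    simp [Perm.inv_def]
  rw [this, card_map, Fin.card_Iio]

theorem IsSimpleReduction.inv_apply_lt_inv_apply {n : ℕ} {ω₁ ω₂ : Perm (Fin n)}
    (h : IsSimpleReduction ω₁ ω₂) {a b : Fin n} (hab : a < b) (hlt : ω₁⁻¹ a < ω₁⁻¹ b) :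
    ω₂⁻¹ a < ω₂⁻¹ b := by
  obtain ⟨i, j, hij, hdesc, rfl⟩ := h
  simp only [mul_inv_rev, swap_inv, Perm.mul_apply]
  refine Fin.swap_lt_swap_of_lt hij hlt ?_
  rintro ⟨rfl, rfl⟩
  simp only [Perm.coe_inv, apply_symm_apply] at hdesc
  exact hdesc.not_gt hab

theorem WeakLE.inv_apply_lt_inv_apply {n : ℕ} {π σ : Perm (Fin n)} (h : WeakLE π σ)
    {a b : Fin n} (hab : a < b) (hlt : σ⁻¹ a < σ⁻¹ b) : π⁻¹ a < π⁻¹ b := by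
  induction h with
  | refl => exact hlt
  | tail _ hstep ih => exact hstep.inv_apply_lt_inv_apply hab ih

def smallerBefore {n : ℕ} (ω : Perm (Fin n)) (x : Fin n) : Finset (Fin n) :=
  {y | y < x ∧ ω⁻¹ y < ω⁻¹ x}

theorem WeakLE.smallerBefore_subset {n : ℕ} {π σ : Perm (Fin n)} (h : WeakLE π σ)
    (x : Fin n) : smallerBefore σ x ⊆ smallerBefore π x := by
  intro y
  simp only [smallerBefore, mem_filter, mem_univ, true_and]
  exact fun ⟨hyx, hlt⟩ => ⟨hyx, h.inv_apply_lt_inv_apply hyx hlt⟩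

theorem card_smallerBefore_le {n : ℕ} (ω : Perm (Fin n)) (x : Fin n) :
    #(smallerBefore ω x) ≤ (ω⁻¹ x : ℕ) := by
  rw [← ω.card_filter_inv_apply_lt (ω⁻¹ x)]
  exact card_le_card (monotone_filter_right _ fun _ _ h => h.2)

theorem inv_apply_le_card_smallerBefore_add {n : ℕ} (ω : Perm (Fin n)) (x : Fin n) :
    (ω⁻¹ x : ℕ) ≤ #(smallerBefore ω x) + (n - 1 - x) := by
  have hsub : ({y | ω⁻¹ y < ω⁻¹ x} : Finset (Fin n)) ⊆ smallerBefore ω x ∪ Ioi x := by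
    intro y
    simp only [smallerBefore, mem_union, mem_filter, mem_univ, true_and, mem_Ioi]
    intro hlt
    rcases lt_trichotomy y x with hyx | rfl | hxy
    · exact Or.inl ⟨hyx, hlt⟩
    · exact absurd hlt (lt_irrefl _)
    · exact Or.inr hxy
  calc (ω⁻¹ x : ℕ) = #{y | ω⁻¹ y < ω⁻¹ x} := (ω.card_filter_inv_apply_lt _).symm
    _ ≤ #(smallerBefore ω x ∪ Ioi x) := card_le_card hsub
    _ ≤ #(smallerBefore ω x) + #(Ioi x) := card_union_le _ _
    _ = #(smallerBefore ω x) + (n - 1 - x) := by rw [Fin.card_Ioi]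

-- `x : Fin n` encodes the element `n − j = x + 1` of `[n]`; positions are `0`-indexed.
theorem weak_bruhat_position_bound_general (n : ℕ) (π σ : Equiv.Perm (Fin n))
    (hw : WeakLE π σ) (j : ℕ) (x : Fin n) (hx : (x : ℕ) + 1 = n - j) :
    (σ⁻¹ x : ℕ) ≤ (π⁻¹ x : ℕ) + j := by
  have hlarger : n - 1 - x = j := by omega
  calc (σ⁻¹ x : ℕ) ≤ #(smallerBefore σ x) + (n - 1 - x) :=
        inv_apply_le_card_smallerBefore_add σ x
    _ ≤ #(smallerBefore π x) + (n - 1 - x) := by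
        gcongr
        exact hw.smallerBefore_subset x
    _ ≤ (π⁻¹ x : ℕ) + j := by
        rw [hlarger]
        gcongr
        exact card_smallerBefore_le π x

/-- If `π ⪯ σ` then for `0 ≤ j ≤ n−1` the position of the element `n − j` in `π`
is at least its position in `σ` minus `j`.  Here `x : Fin n` encodes the element
`n − j` of `[n]` (so its `1`-indexed value is `(x : ℕ) + 1 = n − j`), and positions
satisfy `σ⁻¹(n−j) ≤ π⁻¹(n−j) + j`. -/
theorem weak_bruhat_position_bound (n : ℕ) (π σ : Equiv.Perm (Fin n))
    (hw : WeakLE π σ) (j : ℕ) (hj : j ≤ n - 1) (x : Fin n) (hx : (x : ℕ) + 1 = n - j) :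
    (σ⁻¹ x : ℕ) ≤ (π⁻¹ x : ℕ) + j :=
  weak_bruhat_position_bound_general n π σ hw j x hx
end

section
/- Let n ≥ 1 and let B₁, …, B_n ⊆ [n] be sets such that for all i, j, k ∈ [n]: i ∉ B_i, and if i ∈ B_j and j ∈ B_k then i ∈ B_k. Then the number of permutations π ∈ S_n such that π⁻¹(j) < π⁻¹(i) for every i ∈ [n] and every j ∈ B_i is at least n! / ∏_{i=1}^n (|B_i| + 1); equivalently, #{π ∈ S_n : ∀ i, ∀ j ∈ B_i, π⁻¹(j) < π⁻¹(i)} · ∏_{i=1}^n (|B_i| + 1) ≥ n!. -/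
/-!
Let `e(S)` be the number of linear extensions of a finite strict order `S`. Every linear
extension ends in a maximal element `m` and the rest is a linear extension of `S ∖ {m}`, so
`e(S) = ∑ₘ e(S ∖ {m})` over the maximal `m`. Removing a maximal element does not change the
down-sets `↓i` of the remaining elements, and the closed down-sets of the maximal elements cover
`S`, so `|S| ≤ ∑ₘ (|↓m| + 1)`. Induction on `S` then gives `|S|! ≤ e(S) · ∏ᵢ (|↓i| + 1)`.
For `S = [n]` with `↓i = B_i`, the one-line notations of the permutations counted in the theorem
are exactly the linear extensions.
-/

open Finset
open scoped Nat

namespace Finset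

variable {α : Type*} (r : α → α → Prop) [DecidableRel r] (S : Finset α)

def maximalsBy : Finset α := {m ∈ S | ∀ k ∈ S, ¬ r m k}

theorem exists_mem_maximalsBy [IsStrictOrder α r] {i : α} (hi : i ∈ S) :
    ∃ m ∈ S.maximalsBy r, i = m ∨ r i m := by
  let _ := partialOrderOfSO r
  obtain ⟨m, him, hm⟩ := S.exists_le_maximal hi
  exact ⟨m, mem_filter.mpr ⟨hm.prop, fun k hk => hm.not_gt hk⟩, him⟩

variable [DecidableEq α]

/-- Linear extensions of `r` on `S`, listed bottom-up: no element comes after one of its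
`r`-successors. -/
def linearExtensions : Finset (List α) :=
  {l ∈ S.val.lists.toFinset | l.Pairwise fun a b => ¬ r b a}

variable {r S}

theorem mem_linearExtensions {l : List α} :
    l ∈ S.linearExtensions r ↔ (l : Multiset α) = S.val ∧ l.Pairwise fun a b => ¬ r b a := by
  simp [linearExtensions, Multiset.mem_lists_iff, eq_comm]

theorem coe_append_singleton_eq_val_iff {l : List α} {m : α} :
    ((l ++ [m] : List α) : Multiset α) = S.val ↔ m ∈ S ∧ (l : Multiset α) = (S.erase m).val := by
  rw [Multiset.coe_eq_coe.mpr (List.perm_append_singleton m l), ← Multiset.cons_coe, erase_val]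
  constructor
  · intro h
    refine ⟨?_, by rw [← h, Multiset.erase_cons_head]⟩
    rw [← mem_val, ← h]
    exact Multiset.mem_cons_self m l
  · rintro ⟨hm, hl⟩
    rw [hl, Multiset.cons_erase (mem_val.mpr hm)]

section Irrefl

variable [Std.Irrefl r]

theorem append_singleton_mem_linearExtensions {l : List α} {m : α} :
    l ++ [m] ∈ S.linearExtensions r ↔
      m ∈ S.maximalsBy r ∧ l ∈ (S.erase m).linearExtensions r := by
  simp only [mem_linearExtensions, coe_append_singleton_eq_val_iff, maximalsBy, mem_filter,
    List.pairwise_append, List.pairwise_singleton, List.mem_singleton, forall_eq, true_and]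
  constructor
  · rintro ⟨⟨hm, hl⟩, hpw, hlast⟩
    refine ⟨⟨hm, fun k hk hmk => ?_⟩, hl, hpw⟩
    obtain rfl | hkm := eq_or_ne k m
    · exact irrefl k hmk
    · exact hlast k (by rw [← Multiset.mem_coe, hl, mem_val, mem_erase]; exact ⟨hkm, hk⟩) hmk
  · rintro ⟨⟨hm, hmax⟩, hl, hpw⟩
    refine ⟨⟨hm, hl⟩, hpw, fun k hk => hmax k ?_⟩
    rw [← Multiset.mem_coe, hl, mem_val] at hk
    exact mem_of_mem_erase hk

theorem linearExtensions_eq_biUnion (hS : S.Nonempty) :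
    S.linearExtensions r =
      (S.maximalsBy r).biUnion fun m => ((S.erase m).linearExtensions r).image (· ++ [m]) := by
  ext l
  simp only [mem_biUnion, mem_image]
  constructor
  · intro hl
    obtain rfl | ⟨l', m, rfl⟩ := l.eq_nil_or_concat'
    · obtain ⟨hval, -⟩ := mem_linearExtensions.mp hl
      exact absurd (val_eq_zero.mp hval.symm) hS.ne_empty
    · obtain ⟨hm, hl'⟩ := append_singleton_mem_linearExtensions.mp hl
      exact ⟨m, hm, l', hl', rfl⟩
  · rintro ⟨m, hm, l', hl', rfl⟩
    exact append_singleton_mem_linearExtensions.mpr ⟨hm, hl'⟩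

theorem card_linearExtensions_eq_sum (hS : S.Nonempty) :
    #(S.linearExtensions r) = ∑ m ∈ S.maximalsBy r, #((S.erase m).linearExtensions r) := by
  rw [linearExtensions_eq_biUnion hS, card_biUnion]
  · exact sum_congr rfl fun m _ => card_image_of_injective _ (List.append_left_injective [m])
  · intro m _ m' _ hmm'
    simp only [Function.onFun, disjoint_left, mem_image]
    rintro _ ⟨l, -, rfl⟩ ⟨l', -, h⟩
    exact hmm' (by simpa using (congrArg List.getLast? h).symm)

end Irrefl

theorem filter_erase_of_mem_maximalsBy {m i : α} (hm : m ∈ S.maximalsBy r) (hi : i ∈ S) :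
    {j ∈ S.erase m | r j i} = {j ∈ S | r j i} := by
  rw [filter_erase, erase_eq_of_notMem]
  exact fun hm' => (mem_filter.mp hm).2 i hi (mem_filter.mp hm').2

variable [IsStrictOrder α r]

theorem card_le_sum_maximalsBy : #S ≤ ∑ m ∈ S.maximalsBy r, (#{j ∈ S | r j m} + 1) := by
  have hcover : S ⊆ (S.maximalsBy r).biUnion fun m => insert m {j ∈ S | r j m} := by
    intro i hi
    obtain ⟨m, hm, him⟩ := exists_mem_maximalsBy r S hi
    refine mem_biUnion.mpr ⟨m, hm, ?_⟩
    rcases him with rfl | him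
    · exact mem_insert_self i _
    · exact mem_insert_of_mem (mem_filter.mpr ⟨hi, him⟩)
  calc #S ≤ #((S.maximalsBy r).biUnion fun m => insert m {j ∈ S | r j m}) :=
        card_le_card hcover
    _ ≤ ∑ m ∈ S.maximalsBy r, #(insert m {j ∈ S | r j m}) := card_biUnion_le
    _ ≤ ∑ m ∈ S.maximalsBy r, (#{j ∈ S | r j m} + 1) := sum_le_sum fun m _ => card_insert_le _ _

theorem factorial_card_le_card_linearExtensions_mul_prod :
    (#S)! ≤ #(S.linearExtensions r) * ∏ i ∈ S, (#{j ∈ S | r j i} + 1) := by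
  induction S using strongInduction with
  | H S ih =>
    obtain rfl | hS := S.eq_empty_or_nonempty
    · have hnil : [] ∈ (∅ : Finset α).linearExtensions r :=
        mem_linearExtensions.mpr ⟨rfl, .nil⟩
      simpa using card_pos.mpr ⟨_, hnil⟩
    set D := fun i => #{j ∈ S | r j i} + 1
    have hstep : ∀ m ∈ S.maximalsBy r,
        D m * (#S - 1)! ≤ #((S.erase m).linearExtensions r) * ∏ i ∈ S, D i := by
      intro m hm
      have hmS : m ∈ S := (mem_filter.mp hm).1
      have ih := ih _ (erase_ssubset hmS)
      rw [card_erase_of_mem hmS, prod_congr rfl fun i hi => by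
        rw [filter_erase_of_mem_maximalsBy hm (mem_of_mem_erase hi)]] at ih
      calc D m * (#S - 1)! ≤ D m * (#((S.erase m).linearExtensions r) * ∏ i ∈ S.erase m, D i) :=
            Nat.mul_le_mul_left _ ih
        _ = #((S.erase m).linearExtensions r) * ∏ i ∈ S, D i := by
            rw [← mul_prod_erase S D hmS]; ring
    calc (#S)! = #S * (#S - 1)! := (Nat.mul_factorial_pred hS.card_pos.ne').symm
      _ ≤ (∑ m ∈ S.maximalsBy r, D m) * (#S - 1)! :=
          Nat.mul_le_mul_right _ card_le_sum_maximalsBy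
      _ = ∑ m ∈ S.maximalsBy r, D m * (#S - 1)! := sum_mul _ _ _
      _ ≤ ∑ m ∈ S.maximalsBy r, #((S.erase m).linearExtensions r) * ∏ i ∈ S, D i :=
          sum_le_sum hstep
      _ = #(S.linearExtensions r) * ∏ i ∈ S, D i := by
          rw [← sum_mul, card_linearExtensions_eq_sum hS]

end Finset

theorem List.exists_perm_ofFn_eq {n : ℕ} {l : List (Fin n)}
    (hl : (l : Multiset (Fin n)) = univ.val) :
    ∃ π : Equiv.Perm (Fin n), List.ofFn π = l := by
  have hlen : l.length = n := by simpa using congrArg Multiset.card hl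
  have hnd : l.Nodup := by rw [← Multiset.coe_nodup, hl]; exact univ.nodup
  have hinj : Function.Injective fun i : Fin n => l[(i : ℕ)] :=
    fun i j hij => Fin.ext (hnd.getElem_inj_iff.mp hij)
  refine ⟨Equiv.ofBijective _ (Finite.injective_iff_bijective.mp hinj), ?_⟩
  apply List.ext_getElem <;> simp [hlen]

theorem card_linearExtensions_univ_le {n : ℕ} (r : Fin n → Fin n → Prop) [DecidableRel r]
    [Std.Irrefl r] :
    #((univ : Finset (Fin n)).linearExtensions r) ≤
      Nat.card {π : Equiv.Perm (Fin n) // ∀ i j, r j i → π⁻¹ j < π⁻¹ i} := by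
  rw [Nat.card_eq_fintype_card, Fintype.card_subtype]
  refine (card_le_card (t := image (fun π : Equiv.Perm (Fin n) => List.ofFn π) _)
    fun l hl => ?_).trans card_image_le
  obtain ⟨hval, hpw⟩ := mem_linearExtensions.mp hl
  obtain ⟨π, rfl⟩ := List.exists_perm_ofFn_eq hval
  refine mem_image_of_mem _ (mem_filter.mpr ⟨mem_univ _, fun i j hji => ?_⟩)
  by_contra hle
  rcases (not_lt.mp hle).lt_or_eq with hlt | heq
  · exact absurd hji (by simpa using List.pairwise_ofFn.mp hpw hlt)
  · exact irrefl j (by rwa [π⁻¹.injective heq] at hji)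

/-- If the sets `B₁, …, B_n ⊆ [n]` satisfy `i ∉ B_i` and the transitivity property
`i ∈ B_j, j ∈ B_k ⟹ i ∈ B_k`, then the number of permutations `π` with
`π⁻¹(j) < π⁻¹(i)` for all `i` and all `j ∈ B_i` is at least `n! / ∏ (|B_i| + 1)`. -/
theorem count_perms_above_ideals (n : ℕ) (B : Fin n → Finset (Fin n))
    (h1 : ∀ i, i ∉ B i)
    (h2 : ∀ i j k : Fin n, i ∈ B j → j ∈ B k → i ∈ B k) :
    Nat.factorial n ≤
      Nat.card {π : Equiv.Perm (Fin n) // ∀ i : Fin n, ∀ j ∈ B i, π⁻¹ j < π⁻¹ i} *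
        ∏ i : Fin n, ((B i).card + 1) := by
  have : IsStrictOrder (Fin n) fun j i => j ∈ B i := { irrefl := h1, trans := h2 }
  have hbound := (univ : Finset (Fin n)).factorial_card_le_card_linearExtensions_mul_prod
    (r := fun j i => j ∈ B i)
  simp only [card_univ, Fintype.card_fin, filter_univ_mem] at hbound
  exact hbound.trans (Nat.mul_le_mul_right _ (card_linearExtensions_univ_le _))
end

section
/- Let P be a partial order on a finite set of n elements (say on [n]). Then the number e(P) of linear extensions of P satisfies e(P) ≥ n! / ∏_{i ∈ P} d(i), where d(i) := #{j : j ≤ i in P}; equivalently, e(P) · ∏_{i ∈ P} d(i) ≥ n!. -/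
/-!
Induct on `n` by deleting a maximal element `m`. Numbering `m` last turns every linear extension
of `P - m` into one of `P`, so `e(P) ≥ ∑ e(P - m)` over the maximal `m`; deleting a maximal
element leaves all other down-sets unchanged; and since every element lies below a maximal one,
`∑ d(m) ≥ n`. Hence
`n! = n · (n-1)! ≤ ∑ d(m) · e(P - m) · ∏_{i ≠ m} d(i) ≤ e(P) · ∏ d(i)`.
-/

open Nat

variable {α : Type*}

abbrev LinearExtensionFin (α : Type*) [Preorder α] (n : ℕ) : Type _ :=
  {L : α ≃ Fin n // Monotone L}

section ExtendLast

variable [DecidableEq α] {n : ℕ}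

def extendLast (m : α) (L : {x // x ≠ m} ≃ Fin n) : α ≃ Fin (n + 1) :=
  ((Equiv.optionSubtypeNe m).symm.trans L.optionCongr).trans finSuccEquivLast.symm

@[simp]
lemma extendLast_self (m : α) (L : {x // x ≠ m} ≃ Fin n) : extendLast m L m = Fin.last n := by
  simp [extendLast]

lemma extendLast_of_ne {m a : α} (L : {x // x ≠ m} ≃ Fin n) (ha : a ≠ m) :
    extendLast m L a = (L ⟨a, ha⟩).castSucc := by
  simp [extendLast, Equiv.optionSubtypeNe_symm_of_ne ha]

lemma eq_of_extendLast_eq {m m' : α} {L : {x // x ≠ m} ≃ Fin n} {L' : {x // x ≠ m'} ≃ Fin n}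
    (h : extendLast m L = extendLast m' L') : m = m' :=
  (extendLast m' L').injective <| by rw [extendLast_self, ← h, extendLast_self]

lemma extendLast_injective (m : α) : Function.Injective (extendLast (n := n) m) := by
  intro L L' h
  ext x
  have hx := DFunLike.congr_fun h x.1
  rw [extendLast_of_ne L x.2, extendLast_of_ne L' x.2] at hx
  exact congrArg Fin.val (Fin.castSucc_injective n hx)

lemma monotone_extendLast [PartialOrder α] {m : α} (hm : IsMax m) {L : {x // x ≠ m} ≃ Fin n}
    (hL : Monotone L) : Monotone (extendLast m L) := by
  intro a b hab
  by_cases hb : b = m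
  · subst hb
    simpa using Fin.le_last _
  · have ha : a ≠ m := fun ha => hb (hm.eq_of_le (ha ▸ hab)).symm
    rw [extendLast_of_ne L ha, extendLast_of_ne L hb, Fin.castSucc_le_castSucc_iff]
    exact hL (show (⟨a, ha⟩ : {x // x ≠ m}) ≤ ⟨b, hb⟩ from hab)

end ExtendLast

section PartialOrder

variable [PartialOrder α]

lemma sum_card_linearExtensionFin_ne_isMax_le [Fintype α] [DecidableEq α]
    [DecidablePred (IsMax : α → Prop)] (n : ℕ) :
    ∑ m : {m : α // IsMax m}, Nat.card (LinearExtensionFin {x // x ≠ m.1} n) ≤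
      Nat.card (LinearExtensionFin α (n + 1)) := by
  rw [← Nat.card_sigma]
  refine Nat.card_le_card_of_injective
    (fun p => ⟨extendLast p.1.1 p.2.1, monotone_extendLast p.1.2 p.2.2⟩) ?_
  rintro ⟨⟨m, hm⟩, L, hL⟩ ⟨⟨m', hm'⟩, L', hL'⟩ h
  obtain rfl := eq_of_extendLast_eq (congrArg Subtype.val h)
  obtain rfl := extendLast_injective m (congrArg Subtype.val h)
  rfl

lemma exists_le_isMax [Finite α] (a : α) : ∃ m, a ≤ m ∧ IsMax m := by
  obtain ⟨m, ham, hm⟩ := Finite.exists_le_maximal (p := fun _ => True) (a := a) trivial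
  exact ⟨m, ham, maximal_true.mp hm⟩

lemma card_le_sum_card_Iic_isMax [Fintype α] [DecidablePred (IsMax : α → Prop)] :
    Nat.card α ≤ ∑ m : {m : α // IsMax m}, Nat.card (Set.Iic m.1) := by
  rw [← Nat.card_sigma]
  refine Nat.card_le_card_of_surjective (fun p => p.2.1) fun a => ?_
  obtain ⟨m, ham, hm⟩ := exists_le_isMax a
  exact ⟨⟨⟨m, hm⟩, a, ham⟩, rfl⟩

lemma card_Iic_subtype_ne_of_isMax {m : α} (hm : IsMax m) (i : {x // x ≠ m}) :
    Nat.card (Set.Iic i) = Nat.card (Set.Iic i.1) :=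
  Nat.card_congr
    { toFun := fun j => ⟨j.1, j.2⟩
      invFun := fun j => ⟨⟨j.1, fun h => i.2 (hm.eq_of_le (h ▸ j.2 :)).symm⟩, j.2⟩ }

theorem factorial_le_card_linearExtensionFin_mul_prod [Fintype α] (n : ℕ)
    (hα : Fintype.card α = n) :
    n ! ≤ Nat.card (LinearExtensionFin α n) * ∏ i : α, Nat.card (Set.Iic i) := by
  induction n generalizing α with
  | zero =>
    have : IsEmpty α := Fintype.card_eq_zero_iff.mp hα
    have : Nonempty (LinearExtensionFin α 0) :=
      ⟨Equiv.equivOfIsEmpty α (Fin 0), fun a => isEmptyElim a⟩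
    simp
  | succ n ih =>
    classical
    set d : α → ℕ := fun i => Nat.card (Set.Iic i)
    set e : {m : α // IsMax m} → ℕ := fun m => Nat.card (LinearExtensionFin {x // x ≠ m.1} n)
    have hdelete (m : {m : α // IsMax m}) : n ! ≤ e m * ∏ i : {x // x ≠ m.1}, d i := by
      have := ih (α := {x // x ≠ m.1}) (by simp [Fintype.card_subtype_compl, hα])
      simpa only [card_Iic_subtype_ne_of_isMax m.2] using this
    have hcover : n + 1 ≤ ∑ m : {m : α // IsMax m}, d m := by
      rw [← hα, ← Nat.card_eq_fintype_card]
      exact card_le_sum_card_Iic_isMax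
    calc (n + 1)! = n ! * (n + 1) := by rw [factorial_succ, mul_comm]
      _ ≤ n ! * ∑ m : {m : α // IsMax m}, d m := by gcongr
      _ = ∑ m : {m : α // IsMax m}, n ! * d m := Finset.mul_sum ..
      _ ≤ ∑ m, e m * (∏ i : {x // x ≠ m.1}, d i) * d m := by gcongr with m; exact hdelete m
      _ = (∑ m, e m) * ∏ i, d i := by
        rw [Finset.sum_mul]
        refine Finset.sum_congr rfl fun m _ => ?_
        rw [Fintype.prod_eq_mul_prod_subtype_ne d m.1]
        ring
      _ ≤ _ := by gcongr; exact sum_card_linearExtensionFin_ne_isMax_le n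

end PartialOrder

/-- For any partial order `P` on a set of `n` elements, the number `e(P)` of linear
extensions of `P` satisfies `e(P) ≥ n! / ∏_{i} d(i)`, where `d(i) = #{j : j ≤ i in P}`. -/
theorem linear_extensions_lower_bound (n : ℕ) (P : PartialOrder (Fin n)) :
    Nat.factorial n ≤
      Nat.card {L : Equiv.Perm (Fin n) // ∀ a b : Fin n, P.le a b → L a ≤ L b} *
        ∏ i : Fin n, Nat.card {j : Fin n // P.le j i} :=
  @factorial_le_card_linearExtensionFin_mul_prod (Fin n) P _ n (Fintype.card_fin n)
end
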